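/- arXiv:1601.03019 — 3 statements merged into one kernel-verified Lean document; each statement's English description precedes it below -/
import Mathlib

section
/- For every ε > 0 define the truncated fractional p-Laplacian (−Δ_p)_ε^s u(x) := ∫_{{y : |x−y| > ε}} |u(x)−u(y)|^{p−2}(u(x)−u(y)) / |x−y|^{n+sp} dy. Then for every u ∈ W^{s,p}(ℝⁿ) the function (−Δ_p)_ε^s u belongs to L^{p'}(ℝⁿ), where p' = p/(p−1), and ‖(−Δ_p)_ε^s u‖_{L^{p'}(ℝⁿ)} ≤ (n ω_n / (sp))^{1/p} · ε^{−s} · [u]_{s,p}^{p/p'}, where ω_n denotes the Lebesgue measure of the unit ball of ℝⁿ. -/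
open MeasureTheory Real Filter Metric Bornology

noncomputable section

abbrev Rn (n : ℕ) : Type := EuclideanSpace ℝ (Fin n)

/-- The `p`-th power of the Gagliardo seminorm, `[u]_{s,p}^p`. -/
def gagE (n : ℕ) (s p : ℝ) (u : Rn n → ℝ) : ℝ :=
  ∫ z : Rn n × Rn n, |u z.1 - u z.2| ^ p / ‖z.1 - z.2‖ ^ ((n : ℝ) + s * p)

/-- The Gagliardo seminorm `[u]_{s,p}`. -/
def gagSemi (n : ℕ) (s p : ℝ) (u : Rn n → ℝ) : ℝ := gagE n s p u ^ (1 / p)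

/-- The `L^p(ℝⁿ)` norm. -/
def lpNorm (n : ℕ) (p : ℝ) (u : Rn n → ℝ) : ℝ := (∫ x, |u x| ^ p) ^ (1 / p)

/-- The `L^q(A)` norm. -/
def lqNormOn (n : ℕ) (q : ℝ) (A : Set (Rn n)) (V : Rn n → ℝ) : ℝ :=
  (∫ x in A, |V x| ^ q) ^ (1 / q)

/-- Membership in `W^{s,p}(ℝⁿ)`: `u ∈ L^p(ℝⁿ)` and the Gagliardo energy is finite. -/
def memW (n : ℕ) (s p : ℝ) (u : Rn n → ℝ) : Prop :=
  MemLp u (ENNReal.ofReal p) volume ∧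
    Integrable (fun z : Rn n × Rn n =>
      |u z.1 - u z.2| ^ p / ‖z.1 - z.2‖ ^ ((n : ℝ) + s * p)) volume

/-- Membership in `W̃^{s,p}(Ω)`: members of `W^{s,p}(ℝⁿ)` vanishing (a.e.) outside `Ω`. -/
def memWt (n : ℕ) (s p : ℝ) (Ω : Set (Rn n)) (u : Rn n → ℝ) : Prop :=
  memW n s p u ∧ ∀ᵐ x ∂(volume : Measure (Rn n)), x ∉ Ω → u x = 0

/-- The form `H(u,v)`. -/
def Hform (n : ℕ) (s p : ℝ) (u v : Rn n → ℝ) : ℝ :=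
  (1 / 2) * ∫ z : Rn n × Rn n,
    |u z.1 - u z.2| ^ (p - 2) * (u z.1 - u z.2) * (v z.1 - v z.2) /
      ‖z.1 - z.2‖ ^ ((n : ℝ) + s * p)

/-- The first eigenvalue `λ(V)`. -/
def lam1 (n : ℕ) (s p : ℝ) (Ω : Set (Rn n)) (V : Rn n → ℝ) : ℝ :=
  sInf { r : ℝ | ∃ u : Rn n → ℝ, memWt n s p Ω u ∧ lpNorm n p u = 1 ∧
    r = (1 / 2) * gagE n s p u + ∫ x in Ω, V x * |u x| ^ p }

/-- `lam` is an eigenvalue with eigenfunction `u`. -/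
def IsEigen (n : ℕ) (s p : ℝ) (Ω : Set (Rn n)) (V : Rn n → ℝ) (lam : ℝ)
    (u : Rn n → ℝ) : Prop :=
  memWt n s p Ω u ∧ ¬ (u =ᵐ[(volume : Measure (Rn n))] 0) ∧
    ∀ v : Rn n → ℝ, memWt n s p Ω v →
      Hform n s p u v + ∫ x in Ω, V x * |u x| ^ (p - 2) * u x * v x
        = lam * ∫ x in Ω, |u x| ^ (p - 2) * u x * v x

/-- `u` is a weak super-solution of `(-Δ_p)^s u + V |u|^{p-2} u = 0` in `Ω`,
`u = 0` outside `Ω`. -/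
def IsSuperSol (n : ℕ) (s p : ℝ) (Ω : Set (Rn n)) (V u : Rn n → ℝ) : Prop :=
  memWt n s p Ω u ∧ ∀ v : Rn n → ℝ, memWt n s p Ω v →
    (∀ᵐ x ∂(volume : Measure (Rn n)), 0 ≤ v x) →
    0 ≤ Hform n s p u v + ∫ x in Ω, V x * |u x| ^ (p - 2) * u x * v x

/-- `u` is the positive eigenfunction associated to `λ(V)`, normalized in `L^p`. -/
def IsPosEigen (n : ℕ) (s p : ℝ) (Ω : Set (Rn n)) (V u : Rn n → ℝ) : Prop :=
  IsEigen n s p Ω V (lam1 n s p Ω V) u ∧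
    (∀ᵐ x ∂((volume : Measure (Rn n)).restrict Ω), 0 < u x) ∧ lpNorm n p u = 1

/-- The truncated fractional `p`-Laplacian `(-Δ_p)^s_ε`. -/
def truncOp (n : ℕ) (s p ε : ℝ) (u : Rn n → ℝ) (x : Rn n) : ℝ :=
  ∫ y in {y : Rn n | ε < ‖x - y‖},
    |u x - u y| ^ (p - 2) * (u x - u y) / ‖x - y‖ ^ ((n : ℝ) + s * p)

/-!
Hölder's inequality in `y`, with the kernel `|x - y|^{-(n+sp)}` split as the product of its
powers `1/p'` and `1/p`, bounds `|(-Δ_p)^s_ε u(x)|` by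
`(∫_{|x-y|>ε} |u x - u y|^p / |x-y|^{n+sp} dy)^{1/p'} · (∫_{|z|>ε} |z|^{-(n+sp)} dz)^{1/p}`.
In polar coordinates the last integral is `n ω_n ε^{-sp} / (sp)`, independent of `x`, so
raising to the power `p'` and integrating in `x` (Tonelli) leaves
`(n ω_n ε^{-sp} / (sp))^{p'/p} [u]_{s,p}^p`.
-/

open scoped ENNReal NNReal
open Module Set

theorem rpow_smul_indicator_inv_rpow {d : ℕ} (hd : d ≠ 0) {q ε y : ℝ} (hy : 0 < y) :
    y ^ (d - 1) • (Ioi ε).indicator (fun t => (t ^ q)⁻¹) y =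
      (Ioi ε).indicator (fun t => t ^ ((d : ℝ) - 1 - q)) y := by
  by_cases hyε : y ∈ Ioi ε
  · rw [indicator_of_mem hyε, indicator_of_mem hyε, smul_eq_mul, ← Real.rpow_natCast,
      ← Real.rpow_neg hy.le, ← Real.rpow_add hy, Nat.cast_sub (Nat.one_le_iff_ne_zero.2 hd),
      Nat.cast_one]
    ring_nf
  · simp [indicator_of_notMem hyε]

theorem indicator_setOf_lt_norm {E : Type*} [Norm E] (ε : ℝ) (f : ℝ → ℝ) :
    {z : E | ε < ‖z‖}.indicator (fun z => f ‖z‖) = fun z => (Ioi ε).indicator f ‖z‖ := by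
  ext z
  by_cases h : ε < ‖z‖ <;> simp [h]

section KernelIntegral

variable {E : Type*} [NormedAddCommGroup E] [NormedSpace ℝ E] [FiniteDimensional ℝ E]
  [MeasurableSpace E] [BorelSpace E] [Nontrivial E] (μ : Measure E) [μ.IsAddHaarMeasure]
  {q ε : ℝ}

omit [MeasurableSpace E] [BorelSpace E] in
theorem eqOn_radial_profile :
    EqOn (fun y : ℝ => y ^ (finrank ℝ E - 1) • (Ioi ε).indicator (fun t => (t ^ q)⁻¹) y)
      ((Ioi ε).indicator fun t => t ^ ((finrank ℝ E : ℝ) - 1 - q)) (Ioi 0) :=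
  fun _ hy => rpow_smul_indicator_inv_rpow finrank_pos.ne' hy

theorem integrableOn_inv_norm_rpow (hq : finrank ℝ E < q) (hε : 0 < ε) :
    IntegrableOn (fun z : E => (‖z‖ ^ q)⁻¹) {z | ε < ‖z‖} μ := by
  rw [← integrable_indicator_iff (measurableSet_lt measurable_const measurable_norm),
    indicator_setOf_lt_norm ε fun t => (t ^ q)⁻¹, integrable_fun_norm_addHaar μ,
    integrableOn_congr_fun eqOn_radial_profile measurableSet_Ioi]
  exact ((integrable_indicator_iff measurableSet_Ioi).2
    (integrableOn_Ioi_rpow_of_lt (by linarith) hε)).integrableOn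

theorem integral_inv_norm_rpow (hq : finrank ℝ E < q) (hε : 0 < ε) :
    ∫ z in {z | ε < ‖z‖}, (‖z‖ ^ q)⁻¹ ∂μ =
      finrank ℝ E * μ.real (ball 0 1) * ε ^ ((finrank ℝ E : ℝ) - q) / (q - finrank ℝ E) := by
  rw [← integral_indicator (measurableSet_lt measurable_const measurable_norm),
    indicator_setOf_lt_norm ε fun t => (t ^ q)⁻¹, integral_fun_norm_addHaar μ,
    setIntegral_congr_fun measurableSet_Ioi eqOn_radial_profile,
    setIntegral_indicator measurableSet_Ioi, Ioi_inter_Ioi, max_eq_right hε.le,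
    integral_Ioi_rpow_of_lt (by linarith) hε,
    show (finrank ℝ E : ℝ) - 1 - q + 1 = -(q - finrank ℝ E) by ring, neg_div_neg_eq,
    nsmul_eq_mul, smul_eq_mul, neg_sub]
  ring

theorem lintegral_inv_norm_sub_rpow (hq : finrank ℝ E < q) (hε : 0 < ε) (x : E) :
    ∫⁻ y in {y | ε < ‖x - y‖}, ENNReal.ofReal ((‖x - y‖ ^ q)⁻¹) ∂μ =
      ENNReal.ofReal
        (finrank ℝ E * μ.real (ball 0 1) * ε ^ ((finrank ℝ E : ℝ) - q) / (q - finrank ℝ E)) := by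
  rw [← integral_inv_norm_rpow μ hq hε, ofReal_integral_eq_lintegral_ofReal
      (integrableOn_inv_norm_rpow μ hq hε) (ae_of_all _ fun _ => by positivity),
    ← lintegral_indicator (measurableSet_lt measurable_const measurable_norm),
    ← lintegral_indicator (measurableSet_lt measurable_const (by fun_prop))]
  simp_rw [norm_sub_rev x]
  exact lintegral_sub_right_eq_self
    ({z | ε < ‖z‖}.indicator fun z => ENNReal.ofReal ((‖z‖ ^ q)⁻¹)) x

end KernelIntegral

theorem abs_rpow_sub_two_mul_self {p : ℝ} (hp : 1 < p) (a : ℝ) :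
    |(|a| ^ (p - 2) * a)| = |a| ^ (p - 1) := by
  rw [abs_mul, abs_of_nonneg (Real.rpow_nonneg (abs_nonneg a) _),
    show p - 1 = p - 2 + 1 by ring, Real.rpow_add_one' (abs_nonneg a) (by linarith)]

theorem rpow_div_rpow_mul_inv_rpow {p a k : ℝ} (hp : 1 < p) (ha : 0 ≤ a) (hk : 0 ≤ k) :
    (a ^ p / k) ^ ((p - 1) / p) * k⁻¹ ^ (1 / p) = a ^ (p - 1) / k := by
  have hp0 : p ≠ 0 := by positivity
  have hsum : (p - 1) / p + 1 / p = 1 := by field_simp; ring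
  rw [Real.div_rpow (Real.rpow_nonneg ha p) hk, ← Real.rpow_mul ha, mul_div_cancel₀ _ hp0,
    Real.inv_rpow hk, ← div_eq_mul_inv, div_div,
    ← Real.rpow_add' hk (by rw [hsum]; exact one_ne_zero), hsum, Real.rpow_one]

/-- Hölder's inequality with exponents `p / (p - 1)` and `p`, splitting the weight `1 / k`. -/
theorem lintegral_ofReal_rpow_sub_one_div_le {α : Type*} [MeasurableSpace α] {ν : Measure α}
    {p : ℝ} (hp : 1 < p) {f k : α → ℝ} (hf : AEMeasurable f ν) (hk : AEMeasurable k ν)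
    (hk0 : ∀ a, 0 ≤ k a) :
    ∫⁻ a, ENNReal.ofReal (|f a| ^ (p - 1) / k a) ∂ν ≤
      (∫⁻ a, ENNReal.ofReal (|f a| ^ p / k a) ∂ν) ^ ((p - 1) / p) *
        (∫⁻ a, ENNReal.ofReal (k a)⁻¹ ∂ν) ^ (1 / p) := by
  calc ∫⁻ a, ENNReal.ofReal (|f a| ^ (p - 1) / k a) ∂ν
      = ∫⁻ a, ENNReal.ofReal (|f a| ^ p / k a) ^ ((p - 1) / p) *
          ENNReal.ofReal (k a)⁻¹ ^ (1 / p) ∂ν := by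
        refine lintegral_congr fun a => ?_
        have hk := hk0 a
        rw [ENNReal.ofReal_rpow_of_nonneg (by positivity) (by bound),
          ENNReal.ofReal_rpow_of_nonneg (by positivity) (by positivity),
          ← ENNReal.ofReal_mul (by positivity),
          rpow_div_rpow_mul_inv_rpow hp (abs_nonneg _) hk]
    _ ≤ _ := ENNReal.lintegral_mul_norm_pow_le (by fun_prop) (by fun_prop) (by bound)
        (by positivity) (by field_simp; ring)

section TruncatedOperator

variable {n : ℕ} {s p ε : ℝ} {w : Rn n → ℝ}

theorem enorm_truncOp_le (hp : 1 < p) (hw : Measurable w) (x : Rn n) :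
    ‖truncOp n s p ε w x‖ₑ ≤
      (∫⁻ y in {y | ε < ‖x - y‖},
          ENNReal.ofReal (|w x - w y| ^ p / ‖x - y‖ ^ ((n : ℝ) + s * p))) ^ ((p - 1) / p) *
        (∫⁻ y in {y | ε < ‖x - y‖}, ENNReal.ofReal (‖x - y‖ ^ ((n : ℝ) + s * p))⁻¹) ^ (1 / p) := by
  refine (enorm_integral_le_lintegral_enorm _).trans (le_of_eq_of_le ?_
    (lintegral_ofReal_rpow_sub_one_div_le hp (by fun_prop) (by fun_prop) fun _ => by positivity))
  refine lintegral_congr fun y => ?_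
  rw [← ofReal_norm, Real.norm_eq_abs, abs_div, abs_rpow_sub_two_mul_self hp,
    abs_of_nonneg (Real.rpow_nonneg (norm_nonneg _) _)]

theorem stronglyMeasurable_truncOp (hw : Measurable w) :
    StronglyMeasurable (truncOp n s p ε w) := by
  set Ψ : Rn n × Rn n → ℝ := {z | ε < ‖z.1 - z.2‖}.indicator fun z =>
    |w z.1 - w z.2| ^ (p - 2) * (w z.1 - w z.2) / ‖z.1 - z.2‖ ^ ((n : ℝ) + s * p)
  have hΨ : StronglyMeasurable Ψ :=
    (Measurable.indicator (by fun_prop)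
      (measurableSet_lt measurable_const (by fun_prop))).stronglyMeasurable
  have hT : truncOp n s p ε w = fun x => ∫ y, Ψ (x, y) := by
    funext x
    rw [truncOp, ← integral_indicator (measurableSet_lt measurable_const (by fun_prop))]
    rfl
  rw [hT]
  exact hΨ.integral_prod_right'

theorem lintegral_truncOp_kernel (hn : 1 ≤ n) (hsp : 0 < s * p) (hε : 0 < ε)
    (x : Rn n) :
    ∫⁻ y in {y | ε < ‖x - y‖}, ENNReal.ofReal (‖x - y‖ ^ ((n : ℝ) + s * p))⁻¹ =
      ENNReal.ofReal (n * (volume (ball (0 : Rn n) 1)).toReal / (s * p) * ε ^ (-(s * p))) := by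
  have : NeZero n := ⟨by omega⟩
  have hdim : finrank ℝ (Rn n) = n := finrank_euclideanSpace_fin
  rw [lintegral_inv_norm_sub_rpow volume (by rw [hdim]; linarith) hε, hdim]
  congr 1
  rw [measureReal_def, show (n : ℝ) - (n + s * p) = -(s * p) by ring, add_sub_cancel_left]
  ring

theorem lintegral_enorm_truncOp_rpow_le (hn : 1 ≤ n) (hs : 0 < s) (hp : 1 < p) (hε : 0 < ε)
    (hw : Measurable w) :
    ∫⁻ x, ‖truncOp n s p ε w x‖ₑ ^ (p / (p - 1)) ≤
      ENNReal.ofReal (n * (volume (ball (0 : Rn n) 1)).toReal / (s * p) * ε ^ (-(s * p)))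
          ^ (1 / (p - 1)) *
        ∫⁻ z : Rn n × Rn n,
          ENNReal.ofReal (|w z.1 - w z.2| ^ p / ‖z.1 - z.2‖ ^ ((n : ℝ) + s * p)) := by
  set K := ENNReal.ofReal (n * (volume (ball (0 : Rn n) 1)).toReal / (s * p) * ε ^ (-(s * p)))
  set Φ : Rn n × Rn n → ℝ≥0∞ := fun z =>
    ENNReal.ofReal (|w z.1 - w z.2| ^ p / ‖z.1 - z.2‖ ^ ((n : ℝ) + s * p))
  have hp0 : 0 < p := by positivity
  have hp1 : 0 < p - 1 := by linarith
  calc ∫⁻ x, ‖truncOp n s p ε w x‖ₑ ^ (p / (p - 1))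
      ≤ ∫⁻ x, ((∫⁻ y in {y | ε < ‖x - y‖}, Φ (x, y)) ^ ((p - 1) / p) * K ^ (1 / p))
          ^ (p / (p - 1)) := by
        refine lintegral_mono fun x => ?_
        gcongr
        exact (enorm_truncOp_le hp hw x).trans_eq
          (by rw [lintegral_truncOp_kernel hn (by positivity) hε x])
    _ = ∫⁻ x, K ^ (1 / (p - 1)) * ∫⁻ y in {y | ε < ‖x - y‖}, Φ (x, y) := by
        refine lintegral_congr fun x => ?_
        rw [ENNReal.mul_rpow_of_nonneg _ _ (by positivity), ← ENNReal.rpow_mul, ← ENNReal.rpow_mul,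
          show (p - 1) / p * (p / (p - 1)) = 1 by field_simp,
          show 1 / p * (p / (p - 1)) = 1 / (p - 1) by field_simp, ENNReal.rpow_one, mul_comm]
    _ ≤ ∫⁻ x, K ^ (1 / (p - 1)) * ∫⁻ y, Φ (x, y) := by
        gcongr
        exact Measure.restrict_le_self
    _ = K ^ (1 / (p - 1)) * ∫⁻ z, Φ z := by
        rw [lintegral_const_mul _ (by fun_prop), Measure.volume_eq_prod,
          lintegral_prod _ (by fun_prop)]

theorem eLpNorm_truncOp_le (hn : 1 ≤ n) (hs : 0 < s) (hp : 1 < p) (hε : 0 < ε)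
    (hw : Measurable w) :
    eLpNorm (truncOp n s p ε w) (ENNReal.ofReal (p / (p - 1))) volume ≤
      ENNReal.ofReal (n * (volume (ball (0 : Rn n) 1)).toReal / (s * p) * ε ^ (-(s * p)))
          ^ (1 / p) *
        (∫⁻ z : Rn n × Rn n,
          ENNReal.ofReal (|w z.1 - w z.2| ^ p / ‖z.1 - z.2‖ ^ ((n : ℝ) + s * p)))
          ^ ((p - 1) / p) := by
  have hp0 : 0 < p := by positivity
  have hp1 : 0 < p - 1 := by linarith
  rw [eLpNorm_eq_lintegral_rpow_enorm_toReal (by simp; positivity) ENNReal.ofReal_ne_top,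
    ENNReal.toReal_ofReal (by positivity)]
  calc (∫⁻ x, ‖truncOp n s p ε w x‖ₑ ^ (p / (p - 1))) ^ (1 / (p / (p - 1)))
      ≤ (_ ^ (1 / (p - 1)) * _) ^ (1 / (p / (p - 1))) := by
        gcongr
        exact lintegral_enorm_truncOp_rpow_le hn hs hp hε hw
    _ = _ := by
        rw [ENNReal.mul_rpow_of_nonneg _ _ (by positivity), ← ENNReal.rpow_mul,
          show 1 / (p - 1) * (1 / (p / (p - 1))) = 1 / p by field_simp,
          show 1 / (p / (p - 1)) = (p - 1) / p by field_simp]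

end TruncatedOperator

theorem truncOp_congr_ae {n : ℕ} {s p ε : ℝ} {u w : Rn n → ℝ} (h : u =ᵐ[volume] w) :
    truncOp n s p ε u =ᵐ[volume] truncOp n s p ε w := by
  filter_upwards [h] with x hx
  refine integral_congr_ae (ae_restrict_of_ae (h.mono fun y hy => ?_))
  simp only [hx, hy]

theorem ofReal_gagE_eq_lintegral {n : ℕ} {s p : ℝ} {u w : Rn n → ℝ}
    (hu : Integrable (fun z : Rn n × Rn n =>
      |u z.1 - u z.2| ^ p / ‖z.1 - z.2‖ ^ ((n : ℝ) + s * p)) volume)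
    (h : u =ᵐ[volume] w) :
    ENNReal.ofReal (gagE n s p u) =
      ∫⁻ z : Rn n × Rn n,
        ENNReal.ofReal (|w z.1 - w z.2| ^ p / ‖z.1 - z.2‖ ^ ((n : ℝ) + s * p)) := by
  rw [gagE, ofReal_integral_eq_lintegral_ofReal hu (ae_of_all _ fun _ => by positivity)]
  refine lintegral_congr_ae ?_
  rw [Measure.volume_eq_prod]
  filter_upwards [Measure.quasiMeasurePreserving_fst.ae h,
    Measure.quasiMeasurePreserving_snd.ae h] with z h₁ h₂
  rw [h₁, h₂]

theorem lpNorm_congr_ae {n : ℕ} {q : ℝ} {f g : Rn n → ℝ} (h : f =ᵐ[volume] g) :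
    lpNorm n q f = lpNorm n q g :=
  congrArg (· ^ (1 / q)) (integral_congr_ae (h.mono fun _ hx => congrArg (|·| ^ q) hx))

theorem lpNorm_eq_toReal_eLpNorm {n : ℕ} {q : ℝ} (hq : 0 < q) {f : Rn n → ℝ}
    (hf : MemLp f (ENNReal.ofReal q)) :
    lpNorm n q f = (eLpNorm f (ENNReal.ofReal q) volume).toReal := by
  rw [hf.eLpNorm_eq_integral_rpow_norm (by simpa) ENNReal.ofReal_ne_top,
    ENNReal.toReal_ofReal hq.le, ENNReal.toReal_ofReal (by positivity), _root_.lpNorm, one_div]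
  simp_rw [Real.norm_eq_abs]

theorem statement0_general (n : ℕ) (hn : 1 ≤ n) (s p : ℝ) (hs : 0 < s) (hp : 1 < p)
    (ε : ℝ) (hε : 0 < ε) (u : Rn n → ℝ) (hu : memW n s p u) :
    MemLp (truncOp n s p ε u) (ENNReal.ofReal (p / (p - 1))) volume ∧
    lpNorm n (p / (p - 1)) (truncOp n s p ε u) ≤
      ((n : ℝ) * (volume (ball (0 : Rn n) 1)).toReal / (s * p)) ^ (1 / p) * ε ^ (-s) *
        gagSemi n s p u ^ (p / (p / (p - 1))) := by
  obtain ⟨hu_Lp, hu_energy⟩ := hu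
  set w := hu_Lp.1.mk u
  have huw : u =ᵐ[volume] w := hu_Lp.1.ae_eq_mk
  have hw : Measurable w := hu_Lp.1.measurable_mk
  have hT := truncOp_congr_ae (s := s) (p := p) (ε := ε) huw
  have hbound := eLpNorm_truncOp_le hn hs hp hε hw
  rw [← ofReal_gagE_eq_lintegral hu_energy huw] at hbound
  have hmem : MemLp (truncOp n s p ε w) (ENNReal.ofReal (p / (p - 1))) volume :=
    ⟨(stronglyMeasurable_truncOp hw).aestronglyMeasurable, hbound.trans_lt (by finiteness)⟩
  refine ⟨(memLp_congr_ae hT).2 hmem, ?_⟩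
  have hgag : 0 ≤ gagE n s p u := integral_nonneg fun _ => by positivity
  have hC : 0 ≤ (n : ℝ) * (volume (ball (0 : Rn n) 1)).toReal / (s * p) := by positivity
  rw [lpNorm_congr_ae hT, lpNorm_eq_toReal_eLpNorm (by bound) hmem]
  refine ENNReal.toReal_le_of_le_ofReal
    (mul_nonneg (by positivity) (Real.rpow_nonneg (Real.rpow_nonneg hgag _) _))
    (hbound.trans_eq ?_)
  rw [ENNReal.ofReal_rpow_of_nonneg (by positivity) (by positivity),
    ENNReal.ofReal_rpow_of_nonneg hgag (by bound), ← ENNReal.ofReal_mul (by positivity),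
    Real.mul_rpow hC (by positivity), ← Real.rpow_mul hε.le, gagSemi, ← Real.rpow_mul hgag]
  congr 3 <;> field_simp

theorem statement0 (n : ℕ) (hn : 1 ≤ n) (s p : ℝ) (hs : 0 < s) (hs1 : s < 1) (hp : 1 < p)
    (ε : ℝ) (hε : 0 < ε) (u : Rn n → ℝ) (hu : memW n s p u) :
    MemLp (truncOp n s p ε u) (ENNReal.ofReal (p / (p - 1))) volume ∧
    lpNorm n (p / (p - 1)) (truncOp n s p ε u) ≤
      ((n : ℝ) * (volume (ball (0 : Rn n) 1)).toReal / (s * p)) ^ (1 / p) * ε ^ (-s) *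
        gagSemi n s p u ^ (p / (p / (p - 1))) :=
  statement0_general n hn s p hs hp ε hε u hu
end
end

section
/- For every u, v ∈ W^{s,p}(ℝⁿ), lim_{ε → 0⁺} ∫_{ℝⁿ} (−Δ_p)_ε^s u(x) · v(x) dx = H(u,v), where (−Δ_p)_ε^s u(x) := ∫_{{y : |x−y| > ε}} |u(x)−u(y)|^{p−2}(u(x)−u(y)) / |x−y|^{n+sp} dy. -/
open MeasureTheory Real Filter Metric Bornology

noncomputable section

/-!
Fubini turns `∫ (-Δ_p)^s_ε u · v` into the integral of `Φ(x,y) v(x)` over `{|x - y| > ε}`, where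
`Φ(x,y) = |u(x)-u(y)|^{p-2}(u(x)-u(y)) / |x-y|^{n+sp}`. Since `Φ` is antisymmetric and the region is
symmetric, averaging with the swapped integral gives `½ ∫_{|x-y|>ε} Φ(x,y)(v(x)-v(y))`. For fixed
`ε > 0` everything is integrable by Young's inequality `|a|^{p-1}|b| ≤ |a|^p + |b|^p` together with
the integrability of `|h|^{-n-sp}` on `{|h| > ε}`; dominated convergence as `ε → 0⁺` then gives
`H(u,v)`, the diagonal contributing nothing because the integrand vanishes there.
-/

lemma abs_abs_rpow_sub_two_mul_self_mul_le {p : ℝ} (hp : 1 < p) (t b : ℝ) :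
    |(|t| ^ (p - 2) * t * b)| ≤ |t| ^ p + |b| ^ p := by
  have hpow : ∀ x : ℝ, 0 ≤ x → x ^ (p - 1) * x = x ^ p := fun x hx => by
    rw [← rpow_add_one' hx (by linarith), sub_add_cancel]
  have habs : |(|t| ^ (p - 2) * t)| = |t| ^ (p - 1) := by
    rw [abs_mul, abs_of_nonneg (by positivity), ← rpow_add_one' (abs_nonneg t) (by linarith)]
    ring_nf
  rw [abs_mul, habs]
  rcases le_total |b| |t| with h | h
  · calc |t| ^ (p - 1) * |b| ≤ |t| ^ (p - 1) * |t| := by gcongr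
      _ = |t| ^ p := hpow _ (abs_nonneg t)
      _ ≤ |t| ^ p + |b| ^ p := le_add_of_nonneg_right (by positivity)
  · calc |t| ^ (p - 1) * |b| ≤ |b| ^ (p - 1) * |b| := by gcongr
      _ = |b| ^ p := hpow _ (abs_nonneg b)
      _ ≤ |t| ^ p + |b| ^ p := le_add_of_nonneg_left (by positivity)

lemma integrableOn_norm_rpow_neg_of_lt_norm {E : Type*} [NormedAddCommGroup E] [NormedSpace ℝ E]
    [FiniteDimensional ℝ E] [MeasurableSpace E] [BorelSpace E] {μ : Measure E}
    [μ.IsAddHaarMeasure] {r ε : ℝ} (hr : (Module.finrank ℝ E : ℝ) < r) (hε : 0 < ε) :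
    IntegrableOn (fun t : E => ‖t‖ ^ (-r)) {t | ε < ‖t‖} μ := by
  have hr0 : 0 ≤ r := (Nat.cast_nonneg _).trans hr.le
  have hmeas : MeasurableSet {t : E | ε < ‖t‖} := measurableSet_lt measurable_const measurable_norm
  refine ((integrable_one_add_norm hr).const_mul ((1 + ε⁻¹) ^ r)).integrableOn.mono'
    (by fun_prop : Measurable fun t : E => ‖t‖ ^ (-r)).aestronglyMeasurable
    ((ae_restrict_iff' hmeas).2 (ae_of_all _ fun t (ht : ε < ‖t‖) => ?_))
  have ht0 : 0 < ‖t‖ := hε.trans ht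
  have hcmp : 1 + ‖t‖ ≤ (1 + ε⁻¹) * ‖t‖ := by
    have : 1 ≤ ε⁻¹ * ‖t‖ := by rw [inv_mul_eq_div, one_le_div hε]; exact ht.le
    linarith
  calc ‖‖t‖ ^ (-r)‖ = (1 + ε⁻¹) ^ r * ((1 + ε⁻¹) * ‖t‖) ^ (-r) := by
        rw [norm_of_nonneg (by positivity), mul_rpow (by positivity) ht0.le, ← mul_assoc,
          ← rpow_add (by positivity), add_neg_cancel, rpow_zero, one_mul]
    _ ≤ (1 + ε⁻¹) ^ r * (1 + ‖t‖) ^ (-r) :=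
        mul_le_mul_of_nonneg_left (rpow_le_rpow_of_nonpos (by positivity) hcmp (by linarith))
          (by positivity)

lemma integral_prod_eq_half_integral_add_swap {α : Type*} [MeasurableSpace α] {μ : Measure α}
    [SFinite μ] {G : α × α → ℝ} (hG : Integrable G (μ.prod μ)) :
    ∫ z, G z ∂μ.prod μ = (1 / 2) * ∫ z, (G z + G z.swap) ∂μ.prod μ := by
  rw [integral_add hG (hG.swap : Integrable (fun z => G z.swap) _), integral_prod_swap]
  ring

lemma tendsto_integral_indicator_lt_norm_sub {E : Type*} [SeminormedAddCommGroup E]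
    [MeasurableSpace E] [OpensMeasurableSpace (E × E)] {μ : Measure (E × E)} {f : E × E → ℝ}
    (hf : Integrable f μ)
    (hdiag : ∀ z : E × E, ‖z.1 - z.2‖ = 0 → f z = 0) :
    Tendsto (fun ε : ℝ => ∫ z, {z : E × E | ε < ‖z.1 - z.2‖}.indicator f z ∂μ)
      (nhdsWithin 0 (Set.Ioi 0)) (nhds (∫ z, f z ∂μ)) := by
  refine tendsto_integral_filter_of_dominated_convergence (‖f ·‖)
    (Eventually.of_forall fun ε => hf.aestronglyMeasurable.indicator ?_)
    (Eventually.of_forall fun ε => ae_of_all _ fun z => norm_indicator_le_norm_self _ _)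
    hf.norm (ae_of_all _ fun z => tendsto_const_nhds.congr' ?_)
  · exact measurableSet_lt measurable_const (continuous_fst.sub continuous_snd).norm.measurable
  rcases (norm_nonneg (z.1 - z.2)).eq_or_lt with hz | hz
  · exact Eventually.of_forall fun ε =>
      (Set.indicator_apply_eq_self.2 fun _ => hdiag z hz.symm).symm
  · filter_upwards [Ioo_mem_nhdsGT hz] with ε hε
    exact (Set.indicator_of_mem (s := {z : E × E | ε < ‖z.1 - z.2‖}) hε.2 f).symm

def fracPLapKernel (n : ℕ) (s p : ℝ) (u : Rn n → ℝ) (z : Rn n × Rn n) : ℝ :=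
  |u z.1 - u z.2| ^ (p - 2) * (u z.1 - u z.2) / ‖z.1 - z.2‖ ^ ((n : ℝ) + s * p)

section FracPLapKernel

variable {n : ℕ} {s p : ℝ} {u v : Rn n → ℝ}

lemma fracPLapKernel_swap (z : Rn n × Rn n) :
    fracPLapKernel n s p u z.swap = -fracPLapKernel n s p u z := by
  simp only [fracPLapKernel, Prod.fst_swap, Prod.snd_swap, abs_sub_comm (u z.2),
    norm_sub_rev z.2]
  ring

lemma aestronglyMeasurable_fracPLapKernel (hu : AEStronglyMeasurable u volume) :
    AEStronglyMeasurable (fracPLapKernel n s p u) volume := by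
  have hdiff : AEStronglyMeasurable (fun z : Rn n × Rn n => u z.1 - u z.2) volume :=
    hu.comp_fst.sub hu.comp_snd
  have hpow : Measurable fun t : ℝ => |t| ^ (p - 2) := by fun_prop
  have hw : Measurable fun z : Rn n × Rn n => ‖z.1 - z.2‖ ^ ((n : ℝ) + s * p) := by fun_prop
  exact (((hpow.comp_aemeasurable hdiff.aemeasurable).mul hdiff.aemeasurable).div
    hw.aemeasurable).aestronglyMeasurable

lemma abs_fracPLapKernel_mul_le (hp : 1 < p) (z : Rn n × Rn n) (b : ℝ) :
    |fracPLapKernel n s p u z * b|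
      ≤ (|u z.1 - u z.2| ^ p + |b| ^ p) / ‖z.1 - z.2‖ ^ ((n : ℝ) + s * p) := by
  rw [fracPLapKernel, div_mul_eq_mul_div, abs_div,
    abs_of_nonneg (by positivity : (0 : ℝ) ≤ ‖z.1 - z.2‖ ^ ((n : ℝ) + s * p))]
  exact div_le_div_of_nonneg_right (abs_abs_rpow_sub_two_mul_self_mul_le hp _ _) (by positivity)

lemma integrable_abs_rpow_of_memW (hu : memW n s p u) (hp : 0 < p) :
    Integrable (fun x => |u x| ^ p) volume := by
  simpa [ENNReal.toReal_ofReal hp.le] using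
    hu.1.integrable_norm_rpow (by simpa using hp) ENNReal.ofReal_ne_top

lemma integrable_fracPLapKernel_mul_sub (hp : 1 < p) (hu : memW n s p u) (hv : memW n s p v) :
    Integrable (fun z => fracPLapKernel n s p u z * (v z.1 - v z.2)) volume := by
  have hv' := hv.1.aestronglyMeasurable
  refine (hu.2.add hv.2).mono'
    ((aestronglyMeasurable_fracPLapKernel hu.1.aestronglyMeasurable).mul
      (hv'.comp_fst.sub hv'.comp_snd)) (ae_of_all _ fun z => ?_)
  exact (abs_fracPLapKernel_mul_le hp z _).trans_eq (add_div _ _ _)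

lemma integrable_indicator_fracPLapKernel_mul_fst (hs : 0 < s) (hp : 1 < p)
    (hu : memW n s p u) (hv : memW n s p v) {ε : ℝ} (hε : 0 < ε) :
    Integrable ({z : Rn n × Rn n | ε < ‖z.1 - z.2‖}.indicator
      fun z => fracPLapKernel n s p u z * v z.1) volume := by
  set S := {z : Rn n × Rn n | ε < ‖z.1 - z.2‖}
  set c : ℝ := (n : ℝ) + s * p
  set W : Rn n → ℝ := {t | ε < ‖t‖}.indicator fun t => ‖t‖ ^ (-c)
  have hW : Integrable W volume :=
    (integrableOn_norm_rpow_neg_of_lt_norm (by simp [c]; positivity) hε).integrable_indicator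
      (measurableSet_lt measurable_const measurable_norm)
  -- `|v(x)|^p W(y - x)` is integrable as the integrand of a convolution.
  have hvW : Integrable (fun z : Rn n × Rn n => |v z.1| ^ p * W (z.2 - z.1)) volume :=
    ((integrable_abs_rpow_of_memW hv (by linarith)).convolution_integrand
      (ContinuousLinearMap.mul ℝ ℝ) hW).swap
  have hv' := hv.1.aestronglyMeasurable
  refine (hu.2.add hvW).mono' (((aestronglyMeasurable_fracPLapKernel
      hu.1.aestronglyMeasurable).mul hv'.comp_fst).indicator
      (measurableSet_lt measurable_const (by fun_prop))) (ae_of_all _ fun z => ?_)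
  rw [Pi.add_apply]
  by_cases hz : z ∈ S
  · have hWz : W (z.2 - z.1) = (‖z.1 - z.2‖ ^ c)⁻¹ := by
      rw [norm_sub_rev, ← rpow_neg (norm_nonneg _)]
      exact Set.indicator_of_mem (s := {t | ε < ‖t‖})
        (show ε < ‖z.2 - z.1‖ by rwa [norm_sub_rev]) _
    rw [Set.indicator_of_mem hz, norm_eq_abs, hWz, ← div_eq_mul_inv, ← add_div]
    exact abs_fracPLapKernel_mul_le hp z _
  · rw [Set.indicator_of_notMem hz, norm_zero]
    exact add_nonneg (by positivity) (mul_nonneg (by positivity)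
      (Set.indicator_nonneg (fun t _ => by positivity) _))

lemma integral_truncOp_mul (hs : 0 < s) (hp : 1 < p) (hu : memW n s p u) (hv : memW n s p v)
    {ε : ℝ} (hε : 0 < ε) :
    ∫ x, truncOp n s p ε u x * v x = (1 / 2) * ∫ z, {z : Rn n × Rn n | ε < ‖z.1 - z.2‖}.indicator
      (fun z => fracPLapKernel n s p u z * (v z.1 - v z.2)) z := by
  set S := {z : Rn n × Rn n | ε < ‖z.1 - z.2‖}
  set G := S.indicator fun z => fracPLapKernel n s p u z * v z.1
  have hG : Integrable G (volume.prod volume) :=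
    integrable_indicator_fracPLapKernel_mul_fst hs hp hu hv hε
  have hslice : ∀ x, truncOp n s p ε u x * v x = ∫ y, G (x, y) := fun x => by
    rw [truncOp, ← integral_mul_const, ← integral_indicator
      (measurableSet_lt measurable_const (by fun_prop))]
    rfl
  have hsymm : ∀ z, G z + G z.swap = S.indicator
      (fun z => fracPLapKernel n s p u z * (v z.1 - v z.2)) z := fun z => by
    by_cases hz : z ∈ S
    · have hz' : z.swap ∈ S := by simpa [S, norm_sub_rev] using hz
      simp only [G, Set.indicator_of_mem hz, Set.indicator_of_mem hz', fracPLapKernel_swap,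
        Prod.fst_swap]
      ring
    · have hz' : z.swap ∉ S := by simpa [S, norm_sub_rev] using hz
      simp only [G, Set.indicator_of_notMem hz, Set.indicator_of_notMem hz', add_zero]
  calc ∫ x, truncOp n s p ε u x * v x = ∫ x, ∫ y, G (x, y) := integral_congr_ae
        (ae_of_all _ hslice)
    _ = ∫ z, G z ∂volume.prod volume := (integral_prod G hG).symm
    _ = _ := by rw [integral_prod_eq_half_integral_add_swap hG]; simp only [hsymm]; rfl

end FracPLapKernel

theorem statement1_general (n : ℕ) (s p : ℝ) (hs : 0 < s) (hp : 1 < p)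
    (u v : Rn n → ℝ) (hu : memW n s p u) (hv : memW n s p v) :
    Tendsto (fun ε : ℝ => ∫ x, truncOp n s p ε u x * v x)
      (nhdsWithin 0 (Set.Ioi 0)) (nhds (Hform n s p u v)) := by
  have hH : Hform n s p u v = (1 / 2) * ∫ z, fracPLapKernel n s p u z * (v z.1 - v z.2) := by
    simp only [Hform, fracPLapKernel, div_mul_eq_mul_div]
  have hdiag : ∀ z : Rn n × Rn n, ‖z.1 - z.2‖ = 0 →
      fracPLapKernel n s p u z * (v z.1 - v z.2) = 0 := fun z hz => by
    rw [norm_eq_zero, sub_eq_zero] at hz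
    simp [hz]
  rw [hH]
  refine ((tendsto_integral_indicator_lt_norm_sub
    (integrable_fracPLapKernel_mul_sub hp hu hv) hdiag).const_mul (1 / 2)).congr' ?_
  filter_upwards [self_mem_nhdsWithin] with ε hε
  exact (integral_truncOp_mul hs hp hu hv hε).symm

theorem statement1 (n : ℕ) (hn : 1 ≤ n) (s p : ℝ) (hs : 0 < s) (hs1 : s < 1) (hp : 1 < p)
    (u v : Rn n → ℝ) (hu : memW n s p u) (hv : memW n s p v) :
    Tendsto (fun ε : ℝ => ∫ x, truncOp n s p ε u x * v x)
      (nhdsWithin 0 (Set.Ioi 0)) (nhds (Hform n s p u v)) :=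
  statement1_general n s p hs hp u v hu hv
end
end

section
/- Let 1 < p < ∞ and let u, v : Ω → ℝ be functions with u ≥ 0 and v > 0 on Ω. Define L(u,v)(x,y) := |u(x)−u(y)|^p − |v(x)−v(y)|^{p−2}(v(x)−v(y)) (u(x)^p / v(x)^{p−1} − u(y)^p / v(y)^{p−1}). Then L(u,v)(x,y) ≥ 0 for all (x,y) ∈ Ω × Ω; moreover L(u,v) is identically zero on Ω × Ω if and only if there exists a constant k such that u = k·v on Ω. -/
/-
Write `a = r c`, `b = s d` and assume `d < c` (the case `c < d` is symmetric, `c = d` is trivial).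
Young's inequality in the form `p t^{p-1} s ≤ s^p + (p-1) t^p`, with `(s, t) = (b/d, r)` and
multiplied by `d`, gives `a^p/c^{p-1} - b^p/d^{p-1} ≤ p r^{p-1} (a - b) - (p-1) r^p (c - d)`.
Multiplying by `(c-d)^{p-1}` and applying Young again with `(s, t) = (|a - b|, r (c - d))` bounds
the right side by `|a - b|^p`. The first step is strict unless `r = b/d`, i.e. `a d = b c`, so
`L(u,v)(x,y) = 0` forces `u x / v x = u y / v y`.
-/

open MeasureTheory Real Filter Metric Bornology

noncomputable section

namespace Real

lemma rpow_sub_one_mul_self {q t : ℝ} (ht : 0 ≤ t) (hq : q ≠ 0) : t ^ (q - 1) * t = t ^ q := by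
  rw [← rpow_add_one' ht (by simpa using hq), sub_add_cancel]

lemma mul_rpow_div_rpow_sub_one {p k c : ℝ} (hp : p ≠ 0) (hk : 0 ≤ k) (hc : 0 < c) :
    (k * c) ^ p / c ^ (p - 1) = k ^ p * c := by
  rw [mul_rpow hk hc.le, ← rpow_sub_one_mul_self hc.le hp]
  field_simp

lemma abs_rpow_sub_two_mul_self_mul_self {p : ℝ} (hp : 1 < p) (x : ℝ) :
    |x| ^ (p - 2) * x * x = |x| ^ p := by
  rw [mul_assoc, ← abs_mul_abs_self x, ← mul_assoc, show p - 2 = p - 1 - 1 by ring,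
    rpow_sub_one_mul_self (abs_nonneg x) (by linarith),
    rpow_sub_one_mul_self (abs_nonneg x) (by linarith)]

/-- Young's inequality `s t^{p-1} ≤ s^p / p + t^p / p'`, strict off the diagonal. -/
theorem mul_rpow_sub_one_lt {p s t : ℝ} (hp : 1 < p) (hs : 0 ≤ s) (ht : 0 ≤ t) (hst : s ≠ t) :
    p * t ^ (p - 1) * s < s ^ p + (p - 1) * t ^ p := by
  rcases ht.eq_or_lt with rfl | ht
  · rw [zero_rpow (by linarith), zero_rpow (by linarith)]
    simpa using rpow_pos_of_pos (hs.lt_of_ne hst.symm) p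
  · have hst' : s / t - 1 ≠ 0 := by
      rwa [sub_ne_zero, ne_eq, div_eq_one_iff_eq ht.ne']
    have hbern := one_add_mul_self_lt_rpow_one_add
      (by linarith [div_nonneg hs ht.le] : -1 ≤ s / t - 1) hst' hp
    rw [add_sub_cancel, div_rpow hs ht.le, lt_div_iff₀ (by positivity)] at hbern
    have htp : t ^ p * (s / t) = t ^ (p - 1) * s := by
      rw [← rpow_sub_one_mul_self ht.le (by linarith : p ≠ 0)]
      field_simp
    linear_combination hbern - p * htp

theorem mul_rpow_sub_one_le {p s t : ℝ} (hp : 1 < p) (hs : 0 ≤ s) (ht : 0 ≤ t) :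
    p * t ^ (p - 1) * s ≤ s ^ p + (p - 1) * t ^ p := by
  rcases eq_or_ne s t with rfl | hst
  · linear_combination p * rpow_sub_one_mul_self hs (by linarith : p ≠ 0)
  · exact (mul_rpow_sub_one_lt hp hs ht hst).le

end Real

def piconeRemainder (p a b c d : ℝ) : ℝ :=
  |a - b| ^ p - |c - d| ^ (p - 2) * (c - d) * (a ^ p / c ^ (p - 1) - b ^ p / d ^ (p - 1))

lemma piconeRemainder_comm (p a b c d : ℝ) :
    piconeRemainder p a b c d = piconeRemainder p b a d c := by
  rw [piconeRemainder, piconeRemainder, abs_sub_comm a b, abs_sub_comm c d]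
  ring

lemma piconeRemainder_mul_mul_eq_zero {p k c d : ℝ} (hp : 1 < p) (hk : 0 ≤ k) (hc : 0 < c)
    (hd : 0 < d) : piconeRemainder p (k * c) (k * d) c d = 0 := by
  rw [piconeRemainder, mul_rpow_div_rpow_sub_one (by linarith) hk hc,
    mul_rpow_div_rpow_sub_one (by linarith) hk hd, ← mul_sub, abs_mul, abs_of_nonneg hk,
    mul_rpow hk (abs_nonneg _), ← abs_rpow_sub_two_mul_self_mul_self hp (c - d)]
  ring

lemma piconeRemainder_pos_of_lt {p a b c d : ℝ} (hp : 1 < p) (ha : 0 ≤ a) (hb : 0 ≤ b)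
    (hd : 0 < d) (hdc : d < c) (hne : a * d ≠ b * c) : 0 < piconeRemainder p a b c d := by
  have hc : 0 < c := hd.trans hdc
  obtain ⟨r, hr, rfl⟩ : ∃ r, 0 ≤ r ∧ a = r * c := ⟨a / c, by positivity, by field_simp⟩
  obtain ⟨s, hs, rfl⟩ : ∃ s, 0 ≤ s ∧ b = s * d := ⟨b / d, by positivity, by field_simp⟩
  have hrs : s ≠ r := fun h => hne (by rw [h]; ring)
  set C := c - d
  have hC : 0 < C := sub_pos.mpr hdc
  have hJ : |C| ^ (p - 2) * C = C ^ (p - 1) := by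
    rw [abs_of_pos hC, show p - 2 = p - 1 - 1 by ring,
      rpow_sub_one_mul_self hC.le (by linarith)]
  have hrr := rpow_sub_one_mul_self hr (by linarith : p ≠ 0)
  have hCC := rpow_sub_one_mul_self hC.le (by linarith : p ≠ 0)
  have hdiff : r ^ p * c - s ^ p * d
      < p * r ^ (p - 1) * (r * c - s * d) - (p - 1) * r ^ p * C := by
    have := mul_lt_mul_of_pos_right (mul_rpow_sub_one_lt hp hs hr hrs) hd
    linear_combination this - p * c * hrr
  have hscaled : C ^ (p - 1) * (r ^ p * c - s ^ p * d)
      < p * (r * C) ^ (p - 1) * (r * c - s * d) - (p - 1) * (r * C) ^ p := by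
    have := mul_lt_mul_of_pos_left hdiff (rpow_pos_of_pos hC (p - 1))
    rw [mul_rpow hr hC.le, mul_rpow hr hC.le, ← hCC]
    linear_combination this
  have hyoung := mul_rpow_sub_one_le hp (abs_nonneg (r * c - s * d)) (mul_nonneg hr hC.le)
  have hcoef : 0 ≤ p * (r * C) ^ (p - 1) := by positivity
  have habs := mul_le_mul_of_nonneg_left (le_abs_self (r * c - s * d)) hcoef
  rw [piconeRemainder, mul_rpow_div_rpow_sub_one (by linarith) hr hc,
    mul_rpow_div_rpow_sub_one (by linarith) hs hd, hJ]
  linarith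

lemma piconeRemainder_pos {p a b c d : ℝ} (hp : 1 < p) (ha : 0 ≤ a) (hb : 0 ≤ b) (hc : 0 < c)
    (hd : 0 < d) (hne : a * d ≠ b * c) : 0 < piconeRemainder p a b c d := by
  rcases lt_trichotomy d c with hdc | rfl | hcd
  · exact piconeRemainder_pos_of_lt hp ha hb hd hdc hne
  · have hab : a - b ≠ 0 := sub_ne_zero.mpr fun h => hne (by rw [h])
    simpa [piconeRemainder] using rpow_pos_of_pos (abs_pos.mpr hab) p
  · rw [piconeRemainder_comm]
    exact piconeRemainder_pos_of_lt hp hb ha hc hcd fun h => hne h.symm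

lemma piconeRemainder_eq_zero_iff {p a b c d : ℝ} (hp : 1 < p) (ha : 0 ≤ a) (hb : 0 ≤ b)
    (hc : 0 < c) (hd : 0 < d) : piconeRemainder p a b c d = 0 ↔ a * d = b * c := by
  refine ⟨fun h => by_contra fun hne => (piconeRemainder_pos hp ha hb hc hd hne).ne' h,
    fun h => ?_⟩
  have hb' : b = a / c * d := by field_simp; linarith
  have := piconeRemainder_mul_mul_eq_zero hp (div_nonneg ha hc.le) hc hd
  rwa [div_mul_cancel₀ a hc.ne', ← hb'] at this

lemma piconeRemainder_nonneg {p a b c d : ℝ} (hp : 1 < p) (ha : 0 ≤ a) (hb : 0 ≤ b)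
    (hc : 0 < c) (hd : 0 < d) : 0 ≤ piconeRemainder p a b c d := by
  by_cases h : a * d = b * c
  · exact ((piconeRemainder_eq_zero_iff hp ha hb hc hd).mpr h).ge
  · exact (piconeRemainder_pos hp ha hb hc hd h).le

theorem statement6 {α : Type*} [Nonempty α] (p : ℝ) (hp : 1 < p)
    (u v : α → ℝ) (hu : ∀ x, 0 ≤ u x) (hv : ∀ x, 0 < v x) :
    (∀ x y : α, 0 ≤ |u x - u y| ^ p -
        |v x - v y| ^ (p - 2) * (v x - v y) *
          (u x ^ p / v x ^ (p - 1) - u y ^ p / v y ^ (p - 1))) ∧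
    ((∀ x y : α, |u x - u y| ^ p -
        |v x - v y| ^ (p - 2) * (v x - v y) *
          (u x ^ p / v x ^ (p - 1) - u y ^ p / v y ^ (p - 1)) = 0) ↔
      ∃ k : ℝ, ∀ x, u x = k * v x) := by
  have hL : ∀ x y, piconeRemainder p (u x) (u y) (v x) (v y) = 0 ↔ u x * v y = u y * v x :=
    fun x y => piconeRemainder_eq_zero_iff hp (hu x) (hu y) (hv x) (hv y)
  refine ⟨fun x y => piconeRemainder_nonneg hp (hu x) (hu y) (hv x) (hv y), ⟨fun h => ?_, ?_⟩⟩
  · obtain ⟨x₀⟩ := ‹Nonempty α›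
    refine ⟨u x₀ / v x₀, fun x => ?_⟩
    have := (hL x x₀).mp (h x x₀)
    field_simp [(hv x₀).ne']
    linarith
  · rintro ⟨k, hk⟩ x y
    exact (hL x y).mpr (by rw [hk x, hk y]; ring)
end
end
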